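/- arXiv:2003.00687 — 9 statements merged into one kernel-verified Lean document; each statement's English description precedes it below -/
import Mathlib

section
/- Let λ : ℚ × ℚ → ℂ be square-summable and suppose: (i) λ(x,y) = λ(-x,y) for all x, y ∈ ℚ; (ii) λ(0,b) = 0 for all b ∈ ℚ; (iii) for all a, x, y, b ∈ ℚ with a > 0 one has: if b·x = 0 then λ(x,y)·λ(a,b) = λ(x/a, y)·λ(a,b); if b·x ≠ 0 and 2a + b·x = 0 then λ(x,y)·λ(a,b) = λ(2/b, y - 4/b)·λ(a,-b); and if b·x ≠ 0 and 2a + b·x ≠ 0 then λ(x,y)·λ(a,b) = 0. Then λ(x,y) = 0 for every pair (x,y) ∈ ℚ × ℚ other than (1,0) and (-1,0). -/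
/-!
Taking `x = a`, `y = b` in the third relation gives `λ(a, b)² = 0` for `a > 0` and
`b ∉ {0, -2}`; the second relation then expresses `λ(a, -2)²` through `λ(a, 2) = 0`.
On the line `b = 0`, a nonzero `λ(c, 0)` with `c > 0` makes `x ↦ λ(x, 0)` invariant under
`x ↦ x / c`, so it is constant on the infinite orbits `x c⁻ⁿ`, which square-summability forbids
unless `c = 1`. The symmetry `λ(x, y) = λ(-x, y)` reduces everything to `x ≥ 0`.
-/

theorem eq_zero_of_summable_of_map_mul_eq {K G : Type*} [Field K] [LinearOrder K]
    [IsStrictOrderedRing K] [AddCommGroup G] [TopologicalSpace G] [IsTopologicalAddGroup G]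
    [T2Space G] {g : K → G} (hg : Summable g) {c : K} (hc0 : 0 < c) (hc1 : c ≠ 1)
    (hinv : ∀ x, g (x * c) = g x) {x : K} (hx : x ≠ 0) : g x = 0 := by
  have hconst : ∀ n : ℕ, g (x * c ^ n) = g x := by
    intro n
    induction n with
    | zero => rw [pow_zero, mul_one]
    | succ n ih => rw [pow_succ, ← mul_assoc, hinv, ih]
  have hinj : Function.Injective fun n : ℕ => x * c ^ n :=
    (mul_right_injective₀ hx).comp (pow_right_injective₀ hc0 hc1)
  have hlim := hg.tendsto_cofinite_zero.comp hinj.tendsto_cofinite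
  simp only [Function.comp_def, hconst] at hlim
  exact tendsto_const_nhds_iff.mp hlim

section CoefficientSystem

variable {lam : ℚ × ℚ → ℂ}

theorem lam_eq_zero_of_pos_of_ne_zero
    (heq2 : ∀ a x y b : ℚ, 0 < a → b * x ≠ 0 → 2 * a + b * x = 0 →
      lam (x, y) * lam (a, b) = lam (2 / b, y - 4 / b) * lam (a, -b))
    (heq3 : ∀ a x y b : ℚ, 0 < a → b * x ≠ 0 → 2 * a + b * x ≠ 0 →
      lam (x, y) * lam (a, b) = 0)
    {a b : ℚ} (ha : 0 < a) (hb : b ≠ 0) : lam (a, b) = 0 := by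
  have h_of_ne : ∀ {b : ℚ}, b ≠ 0 → b ≠ -2 → lam (a, b) = 0 := by
    intro b hb hb2
    have hsum_ne : 2 * a + b * a ≠ 0 := by
      intro h
      have : b + 2 = 0 := (mul_eq_zero.mp (show a * (b + 2) = 0 by linarith)).resolve_left ha.ne'
      exact hb2 (by linarith)
    exact mul_self_eq_zero.mp (heq3 a a b b ha (mul_ne_zero hb ha.ne') hsum_ne)
  by_cases hb2 : b = -2
  · subst hb2
    have h := heq2 a a (-2) (-2) ha (mul_ne_zero (by norm_num) ha.ne') (by ring)
    rw [neg_neg, h_of_ne two_ne_zero (by norm_num), mul_zero] at h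
    exact mul_self_eq_zero.mp h
  · exact h_of_ne hb hb2

theorem lam_pos_zero_eq_zero (hsum : Summable fun p : ℚ × ℚ => ‖lam p‖ ^ 2)
    (heq1 : ∀ a x y b : ℚ, 0 < a → b * x = 0 →
      lam (x, y) * lam (a, b) = lam (x / a, y) * lam (a, b))
    {c : ℚ} (hc0 : 0 < c) (hc1 : c ≠ 1) : lam (c, 0) = 0 := by
  by_contra hne
  have hinv : ∀ x, ‖lam (x * c⁻¹, 0)‖ ^ 2 = ‖lam (x, 0)‖ ^ 2 := fun x => by
    rw [← div_eq_mul_inv, mul_right_cancel₀ hne (heq1 c x 0 0 hc0 (zero_mul x))]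
  have hline : Summable fun x : ℚ => ‖lam (x, 0)‖ ^ 2 :=
    hsum.comp_injective fun x y h => congrArg Prod.fst h
  exact hne <| norm_eq_zero.mp <| pow_eq_zero_iff two_ne_zero |>.mp <|
    eq_zero_of_summable_of_map_mul_eq hline (inv_pos.mpr hc0) (inv_ne_one.mpr hc1) hinv
      hc0.ne'

end CoefficientSystem

/-- Solution of the coefficient system for `E(u_{e₁} + u_{-e₁})` in the
`PSL₂(ℚ)` case: the only possibly nonzero coefficients are at `(1,0)` and `(-1,0)`. -/
theorem stmt_0 (lam : ℚ × ℚ → ℂ)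
    (hsum : Summable fun p : ℚ × ℚ => ‖lam p‖ ^ 2)
    (hsym : ∀ x y : ℚ, lam (x, y) = lam (-x, y))
    (hzero : ∀ b : ℚ, lam (0, b) = 0)
    (heq1 : ∀ a x y b : ℚ, 0 < a → b * x = 0 →
      lam (x, y) * lam (a, b) = lam (x / a, y) * lam (a, b))
    (heq2 : ∀ a x y b : ℚ, 0 < a → b * x ≠ 0 → 2 * a + b * x = 0 →
      lam (x, y) * lam (a, b) = lam (2 / b, y - 4 / b) * lam (a, -b))
    (heq3 : ∀ a x y b : ℚ, 0 < a → b * x ≠ 0 → 2 * a + b * x ≠ 0 →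
      lam (x, y) * lam (a, b) = 0) :
    ∀ x y : ℚ, (x, y) ≠ ((1 : ℚ), (0 : ℚ)) → (x, y) ≠ ((-1 : ℚ), (0 : ℚ)) →
      lam (x, y) = 0 := by
  intro x y h1 h2
  have habs : lam (x, y) = lam (|x|, y) := by
    rcases abs_choice x with h | h <;> rw [h]
    exact hsym x y
  rw [habs]
  rcases (abs_nonneg x).eq_or_lt with hx | hx
  · rw [← hx, hzero]
  by_cases hy : y = 0
  · subst hy
    refine lam_pos_zero_eq_zero hsum heq1 hx fun hx1 => ?_
    rcases abs_eq (zero_le_one' ℚ) |>.mp hx1 with rfl | rfl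
    exacts [h1 rfl, h2 rfl]
  · exact lam_eq_zero_of_pos_of_ne_zero heq2 heq3 hx hy
end

section
/- Let λ, μ : ℚ × ℚ → ℂ be square-summable functions satisfying: (i) λ(-1,b) = 0 and μ(-1,b) = 0 for all b ∈ ℚ; (ii) λ(x,y) = λ(-2-x, y) and μ(x,y) = μ(-2-x, y) for all x, y ∈ ℚ; (iii) λ(x,y) + μ(x,-y) = 0 for all x ∈ ℚ and all y ≠ 0, and λ(x,0) + μ(x,0) = 0 for all x ∉ {0, -2}; (iv) for all s, a, y ∈ ℚ with a ≠ -1 and s ≠ 0: λ(s-1-(a+1)y, y)·λ(a,0) + μ(s-1-(a+1)y, -y)·μ(-2-a, 0) = λ(s/(a+1)-y-1, y)·λ(a,0) + μ(-a-2, 0)·μ(y-1-s/(a+1), -y), and also λ(s-1-(a+1)y, -y)·μ(-2-a, 0) + μ(s-1-(a+1)y, y)·λ(a,0) = λ(y-s/(a+1)-1, -y)·μ(-a-2, 0) + μ(s/(a+1)-1-y, y)·λ(a,0); (v) for all s, a, b, y ∈ ℚ with a ≠ -1, b ≠ 0, s ≠ 0, y ≠ s/(a+1) and y ≠ s/(a+1)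 + 2/b: λ(s-1-(a+1)y, y)·λ(a,b) + μ(s-1-(a+1)y, -y)·μ(-2-a, -b) = 0; (vi) for all s, a, b, y ∈ ℚ with a ≠ -1, b ≠ 0, s ≠ 0, y ≠ s/(a+1) and y ≠ s/(a+1) - 2/b: λ(s-1-(a+1)y, -y)·μ(-2-a, -b) + μ(s-1-(a+1)y, y)·λ(a,b) = 0. Then λ(x,y) = 0 and μ(x,y) = 0 for every pair (x,y) ∈ ℚ × ℚ other than (0,0) and (-2,0). -/
/-!
For `y ≠ 0`, taking `s = (x + 1)(1 ± y)` in (v) or (vi) makes the first coefficient `λ(x, y)`,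
and (ii), (iii) turn the relation into `± 2 λ(x, y)² = 0`; (v) is admissible unless
`y ∈ {-1, -2}` and (vi) unless `y ∈ {1, 2}`.

On the line `y = 0`, let `c ∉ {0, -1, -2}` and `G t = μ(t - 1, 0) - λ(t - 1, 0)`. If `μ(c, 0) ≠ 0`,
relation (iv) at `y = 0` can be divided by `μ(c, 0)` and says that `G` is invariant under
`t ↦ (c + 1) t`. By (iii), `G = 2 μ(· - 1, 0)` away from `t = ±1`, so `μ` takes the nonzero value
`μ(c, 0)` at the infinitely many points `((c + 1)ⁿ - 1, 0)`, contradicting square-summability.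
-/

open Function

theorem Summable.eq_zero_of_injective_of_comp_eq {α E : Type*} [UniformSpace E] [AddCommGroup E]
    [IsUniformAddGroup E] [CompleteSpace E] [T2Space E] {f : α → E} (hf : Summable f)
    {g : ℕ → α} (hg : Injective g) {c : E} (hfg : ∀ n, f (g n) = c) : c = 0 :=
  (summable_const_iff c).mp ((hf.comp_injective hg).congr hfg)

theorem pow_right_injective_of_abs_ne_one {K : Type*} [Field K] [LinearOrder K]
    [IsStrictOrderedRing K] {q : K} (hq₀ : q ≠ 0) (hq₁ : |q| ≠ 1) : Injective (q ^ ·) :=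
  fun m n hmn ↦ pow_right_injective₀ (abs_pos.mpr hq₀) hq₁ <| by
    simp only [← abs_pow, show q ^ m = q ^ n from hmn]

theorem apply_pow_mul_eq {K β : Type*} [Field K] {F : K → β} {q : K} (hq : q ≠ 0)
    (hF : ∀ t ≠ 0, F (q * t) = F t) {t : K} (ht : t ≠ 0) (n : ℕ) : F (q ^ n * t) = F t := by
  induction n with
  | zero => simp
  | succ n ih => rw [pow_succ', mul_assoc, hF _ (mul_ne_zero (pow_ne_zero n hq) ht), ih]

section CoefficientSystem

variable {lam mu : ℚ × ℚ → ℂ}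

theorem lam_eq_zero_of_snd_ne_zero
    (h1l : ∀ b : ℚ, lam (-1, b) = 0)
    (h2m : ∀ x y : ℚ, mu (x, y) = mu (-2 - x, y))
    (h3 : ∀ x y : ℚ, y ≠ 0 → lam (x, y) + mu (x, -y) = 0)
    (h5 : ∀ s a b y : ℚ, a ≠ -1 → b ≠ 0 → s ≠ 0 →
      y ≠ s / (a + 1) → y ≠ s / (a + 1) + 2 / b →
      lam (s - 1 - (a + 1) * y, y) * lam (a, b)
        + mu (s - 1 - (a + 1) * y, -y) * mu (-2 - a, -b) = 0)
    (h6 : ∀ s a b y : ℚ, a ≠ -1 → b ≠ 0 → s ≠ 0 →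
      y ≠ s / (a + 1) → y ≠ s / (a + 1) - 2 / b →
      lam (s - 1 - (a + 1) * y, -y) * mu (-2 - a, -b)
        + mu (s - 1 - (a + 1) * y, y) * lam (a, b) = 0)
    {x y : ℚ} (hy : y ≠ 0) : lam (x, y) = 0 := by
  rcases eq_or_ne x (-1) with rfl | hx
  · exact h1l y
  have hx' : x + 1 ≠ 0 := fun h ↦ hx (eq_neg_of_add_eq_zero_left h)
  have hmu : mu (x, -y) = -lam (x, y) := eq_neg_of_add_eq_zero_right (h3 x y hy)
  have hmu' : mu (-2 - x, -y) = -lam (x, y) := by rw [← h2m, hmu]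
  refine mul_self_eq_zero.mp ?_
  by_cases hy' : y = -1 ∨ y = -2
  · have hs : (x + 1) * (1 - y) ≠ 0 := mul_ne_zero hx' (by rcases hy' with rfl | rfl <;> norm_num)
    have hdiv : (x + 1) * (1 - y) / (x + 1) = 1 - y := by field_simp
    have key := h6 ((x + 1) * (1 - y)) x y (-y) hx hy hs (by rw [hdiv]; grind)
      (by rw [hdiv]; intro h; field_simp at h; rcases hy' with rfl | rfl <;> norm_num at h)
    rw [show (x + 1) * (1 - y) - 1 - (x + 1) * -y = x by ring, neg_neg, hmu, hmu'] at key
    linear_combination (-1 / 2 : ℂ) * key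
  · rw [not_or] at hy'
    have hs : (x + 1) * (1 + y) ≠ 0 := mul_ne_zero hx' (by grind)
    have hdiv : (x + 1) * (1 + y) / (x + 1) = 1 + y := by field_simp
    have key := h5 ((x + 1) * (1 + y)) x y y hx hy hs (by rw [hdiv]; grind)
      (by rw [hdiv]; intro h; field_simp at h; grind)
    rw [show (x + 1) * (1 + y) - 1 - (x + 1) * y = x by ring, hmu, hmu'] at key
    linear_combination (1 / 2 : ℂ) * key

theorem mu_sub_lam_mul_eq
    (h2m : ∀ x y : ℚ, mu (x, y) = mu (-2 - x, y))
    (h3' : ∀ x : ℚ, x ≠ 0 → x ≠ -2 → lam (x, 0) + mu (x, 0) = 0)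
    (h4 : ∀ s a y : ℚ, a ≠ -1 → s ≠ 0 →
      lam (s - 1 - (a + 1) * y, y) * lam (a, 0)
        + mu (s - 1 - (a + 1) * y, -y) * mu (-2 - a, 0)
      = lam (s / (a + 1) - y - 1, y) * lam (a, 0)
        + mu (-a - 2, 0) * mu (y - 1 - s / (a + 1), -y))
    {c : ℚ} (hc0 : c ≠ 0) (hc1 : c ≠ -1) (hc2 : c ≠ -2) (hM : mu (c, 0) ≠ 0)
    {t : ℚ} (ht : t ≠ 0) :
    mu ((c + 1) * t - 1, 0) - lam ((c + 1) * t - 1, 0) = mu (t - 1, 0) - lam (t - 1, 0) := by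
  have hc1' : c + 1 ≠ 0 := fun h ↦ hc1 (eq_neg_of_add_eq_zero_left h)
  have key := h4 ((c + 1) * t) c 0 hc1 (mul_ne_zero hc1' ht)
  have hlam : lam (c, 0) = -mu (c, 0) := eq_neg_of_add_eq_zero_left (h3' c hc0 hc2)
  rw [mul_div_cancel_left₀ t hc1', show (0 : ℚ) - 1 - t = -2 - (t - 1) by ring,
    show -c - 2 = -2 - c by ring, ← h2m, ← h2m (t - 1)] at key
  simp only [mul_zero, sub_zero, neg_zero, hlam] at key
  exact mul_left_cancel₀ hM (by linear_combination key)

theorem mu_eq_zero_of_snd_eq_zero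
    (hsumm : Summable fun p : ℚ × ℚ => ‖mu p‖ ^ 2)
    (h2m : ∀ x y : ℚ, mu (x, y) = mu (-2 - x, y))
    (h3' : ∀ x : ℚ, x ≠ 0 → x ≠ -2 → lam (x, 0) + mu (x, 0) = 0)
    (h4 : ∀ s a y : ℚ, a ≠ -1 → s ≠ 0 →
      lam (s - 1 - (a + 1) * y, y) * lam (a, 0)
        + mu (s - 1 - (a + 1) * y, -y) * mu (-2 - a, 0)
      = lam (s / (a + 1) - y - 1, y) * lam (a, 0)
        + mu (-a - 2, 0) * mu (y - 1 - s / (a + 1), -y))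
    {c : ℚ} (hc0 : c ≠ 0) (hc1 : c ≠ -1) (hc2 : c ≠ -2) : mu (c, 0) = 0 := by
  by_contra hM
  set q := c + 1
  have hq0 : q ≠ 0 := fun h ↦ hc1 (eq_neg_of_add_eq_zero_left h)
  have hq1 : |q| ≠ 1 := by rw [Ne, abs_eq zero_le_one]; grind
  have h2mu : ∀ x, x ≠ 0 → x ≠ -2 → mu (x, 0) - lam (x, 0) = 2 * mu (x, 0) := fun x h0 h2 ↦ by
    linear_combination -h3' x h0 h2
  have horbit : ∀ n : ℕ, mu (q ^ (n + 1) - 1, 0) = mu (c, 0) := fun n ↦ by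
    have hn : |q ^ (n + 1)| ≠ 1 := by
      rw [abs_pow]; exact (pow_eq_one_iff_of_nonneg (abs_nonneg q) n.succ_ne_zero).not.mpr hq1
    rw [Ne, abs_eq zero_le_one, not_or] at hn
    have h := apply_pow_mul_eq (F := fun t ↦ mu (t - 1, 0) - lam (t - 1, 0)) hq0
      (fun t ht ↦ mu_sub_lam_mul_eq h2m h3' h4 hc0 hc1 hc2 hM ht) hq0 n
    rw [← pow_succ, show q - 1 = c by ring, h2mu _ (sub_ne_zero.mpr hn.1) (by grind),
      h2mu c hc0 hc2] at h
    linear_combination h / 2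
  have hinj : Injective fun n : ℕ ↦ (q ^ (n + 1) - 1, (0 : ℚ)) := fun m n hmn ↦
    Nat.succ_injective <| pow_right_injective_of_abs_ne_one hq0 hq1 <| by
      simpa using congrArg Prod.fst hmn
  exact hM <| norm_eq_zero.mp <| (pow_eq_zero_iff two_ne_zero).mp <|
    hsumm.eq_zero_of_injective_of_comp_eq (c := ‖mu (c, 0)‖ ^ 2) hinj fun n ↦ by rw [horbit]

end CoefficientSystem

theorem stmt_1_general (lam mu : ℚ × ℚ → ℂ)
    (hsumm : Summable fun p : ℚ × ℚ => ‖mu p‖ ^ 2)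
    (h1l : ∀ b : ℚ, lam (-1, b) = 0)
    (h1m : ∀ b : ℚ, mu (-1, b) = 0)
    (h2m : ∀ x y : ℚ, mu (x, y) = mu (-2 - x, y))
    (h3 : ∀ x y : ℚ, y ≠ 0 → lam (x, y) + mu (x, -y) = 0)
    (h3' : ∀ x : ℚ, x ≠ 0 → x ≠ -2 → lam (x, 0) + mu (x, 0) = 0)
    (h4 : ∀ s a y : ℚ, a ≠ -1 → s ≠ 0 →
      lam (s - 1 - (a + 1) * y, y) * lam (a, 0)
        + mu (s - 1 - (a + 1) * y, -y) * mu (-2 - a, 0)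
      = lam (s / (a + 1) - y - 1, y) * lam (a, 0)
        + mu (-a - 2, 0) * mu (y - 1 - s / (a + 1), -y))
    (h5 : ∀ s a b y : ℚ, a ≠ -1 → b ≠ 0 → s ≠ 0 →
      y ≠ s / (a + 1) → y ≠ s / (a + 1) + 2 / b →
      lam (s - 1 - (a + 1) * y, y) * lam (a, b)
        + mu (s - 1 - (a + 1) * y, -y) * mu (-2 - a, -b) = 0)
    (h6 : ∀ s a b y : ℚ, a ≠ -1 → b ≠ 0 → s ≠ 0 →
      y ≠ s / (a + 1) → y ≠ s / (a + 1) - 2 / b →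
      lam (s - 1 - (a + 1) * y, -y) * mu (-2 - a, -b)
        + mu (s - 1 - (a + 1) * y, y) * lam (a, b) = 0) :
    ∀ x y : ℚ, (x, y) ≠ ((0 : ℚ), (0 : ℚ)) → (x, y) ≠ ((-2 : ℚ), (0 : ℚ)) →
      lam (x, y) = 0 ∧ mu (x, y) = 0 := by
  intro x y h00 h20
  rcases eq_or_ne y 0 with rfl | hy
  · rcases eq_or_ne x (-1) with rfl | hx1
    · exact ⟨h1l 0, h1m 0⟩
    have hx0 : x ≠ 0 := by rintro rfl; exact h00 rfl
    have hx2 : x ≠ -2 := by rintro rfl; exact h20 rfl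
    have hmu := mu_eq_zero_of_snd_eq_zero hsumm h2m h3' h4 hx0 hx1 hx2
    exact ⟨by simpa [hmu] using h3' x hx0 hx2, hmu⟩
  · have hlam {x y : ℚ} : y ≠ 0 → lam (x, y) = 0 := lam_eq_zero_of_snd_ne_zero h1l h2m h3 h5 h6
    refine ⟨hlam hy, ?_⟩
    simpa [hlam (neg_ne_zero.mpr hy)] using h3 x (-y) (neg_ne_zero.mpr hy)

/-- Solution of the coefficient system for `c_{e₁}` in the `SL₂(ℚ)` case:
the only possibly nonzero coefficients are at `(0,0)` and `(-2,0)`. -/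
theorem stmt_1 (lam mu : ℚ × ℚ → ℂ)
    (hsuml : Summable fun p : ℚ × ℚ => ‖lam p‖ ^ 2)
    (hsumm : Summable fun p : ℚ × ℚ => ‖mu p‖ ^ 2)
    (h1l : ∀ b : ℚ, lam (-1, b) = 0)
    (h1m : ∀ b : ℚ, mu (-1, b) = 0)
    (h2l : ∀ x y : ℚ, lam (x, y) = lam (-2 - x, y))
    (h2m : ∀ x y : ℚ, mu (x, y) = mu (-2 - x, y))
    (h3 : ∀ x y : ℚ, y ≠ 0 → lam (x, y) + mu (x, -y) = 0)
    (h3' : ∀ x : ℚ, x ≠ 0 → x ≠ -2 → lam (x, 0) + mu (x, 0) = 0)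
    (h4 : ∀ s a y : ℚ, a ≠ -1 → s ≠ 0 →
      lam (s - 1 - (a + 1) * y, y) * lam (a, 0)
        + mu (s - 1 - (a + 1) * y, -y) * mu (-2 - a, 0)
      = lam (s / (a + 1) - y - 1, y) * lam (a, 0)
        + mu (-a - 2, 0) * mu (y - 1 - s / (a + 1), -y))
    (h4' : ∀ s a y : ℚ, a ≠ -1 → s ≠ 0 →
      lam (s - 1 - (a + 1) * y, -y) * mu (-2 - a, 0)
        + mu (s - 1 - (a + 1) * y, y) * lam (a, 0)
      = lam (y - s / (a + 1) - 1, -y) * mu (-a - 2, 0)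
        + mu (s / (a + 1) - 1 - y, y) * lam (a, 0))
    (h5 : ∀ s a b y : ℚ, a ≠ -1 → b ≠ 0 → s ≠ 0 →
      y ≠ s / (a + 1) → y ≠ s / (a + 1) + 2 / b →
      lam (s - 1 - (a + 1) * y, y) * lam (a, b)
        + mu (s - 1 - (a + 1) * y, -y) * mu (-2 - a, -b) = 0)
    (h6 : ∀ s a b y : ℚ, a ≠ -1 → b ≠ 0 → s ≠ 0 →
      y ≠ s / (a + 1) → y ≠ s / (a + 1) - 2 / b →
      lam (s - 1 - (a + 1) * y, -y) * mu (-2 - a, -b)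
        + mu (s - 1 - (a + 1) * y, y) * lam (a, b) = 0) :
    ∀ x y : ℚ, (x, y) ≠ ((0 : ℚ), (0 : ℚ)) → (x, y) ≠ ((-2 : ℚ), (0 : ℚ)) →
      lam (x, y) = 0 ∧ mu (x, y) = 0 :=
  stmt_1_general lam mu hsumm h1l h1m h2m h3 h3' h4 h5 h6
end

section
/- Let k ≥ 1 be an integer and let λ : ℤ × ℤ → ℂ satisfy: (i) λ(x,y) = λ(-x,y) for all x, y ∈ ℤ; (ii) λ(0,b) = 0 for all b ∈ ℤ; (iii) for all x, y, b ∈ ℤ and all integers a > 0: if b·x = 0 and a divides x, then λ(x,y)·λ(a,b) = λ(k·x/a, y)·λ(a,b); if b ≠ 0, b divides 2, and 2a + b·x = 0, then λ(x,y)·λ(a,b) = λ(2k/b, y - 4/b)·λ(a,-b); and in all other cases λ(x,y)·λ(a,b) = 0. Then λ(x,y) = 0 for every pair (x,y) ∈ ℤ × ℤ other than (k,0) and (-k,0). -/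
/-!
Each relation is used with `(a, b)` chosen so that it controls a square `λ(x, y)²`.
For `x > 0` and `y ∉ {0, -2}` the pair `((x, y), (x, y))` falls into the vanishing case,
so `λ(x, y)² = 0`. For `y = -2` the flip relation gives `λ(x, -2)² = λ(-k, 0) λ(x, 2) = 0`.
For `y = 0` the scaling relation gives `λ(x, 0)² = λ(k, 0) λ(x, 0)`, and if `x ≠ k` then
`k ∤ x` or `x ∤ k`, so the vanishing case kills `λ(x, 0) λ(k, 0)`. Negative `x` reduce to
positive ones by symmetry.
-/

def ScaleRel (k : ℤ) (lam : ℤ × ℤ → ℂ) : Prop :=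
  ∀ x y b a : ℤ, 0 < a → b * x = 0 → a ∣ x →
    lam (x, y) * lam (a, b) = lam (k * x / a, y) * lam (a, b)

def FlipRel (k : ℤ) (lam : ℤ × ℤ → ℂ) : Prop :=
  ∀ x y b a : ℤ, 0 < a → b ≠ 0 → b ∣ 2 → 2 * a + b * x = 0 →
    lam (x, y) * lam (a, b) = lam (2 * k / b, y - 4 / b) * lam (a, -b)

def VanishRel (lam : ℤ × ℤ → ℂ) : Prop :=
  ∀ x y b a : ℤ, 0 < a → ¬(b * x = 0 ∧ a ∣ x) → ¬(b ≠ 0 ∧ b ∣ 2 ∧ 2 * a + b * x = 0) →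
    lam (x, y) * lam (a, b) = 0

section

variable {k : ℤ} {lam : ℤ × ℤ → ℂ} {x y a : ℤ}

theorem VanishRel.eq_zero_of_ne_zero_of_ne_neg_two (h : VanishRel lam) (hx : 0 < x)
    (hy : y ≠ 0) (hy2 : y ≠ -2) : lam (x, y) = 0 := by
  refine mul_self_eq_zero.mp (h x y y x hx ?_ ?_)
  · rintro ⟨hyx, -⟩
    exact (mul_ne_zero hy hx.ne') hyx
  · rintro ⟨-, -, hxy⟩
    have : x * (y + 2) = 0 := by linarith
    exact (mul_ne_zero hx.ne' (by omega)) this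

theorem VanishRel.mul_eq_zero_of_not_dvd (h : VanishRel lam) (ha : 0 < a) (hax : ¬a ∣ x) :
    lam (x, y) * lam (a, 0) = 0 :=
  h x y 0 a ha (fun h => hax h.2) (fun h => h.1 rfl)

theorem FlipRel.eq_zero_of_neg_two (h2 : FlipRel k lam) (h3 : VanishRel lam) (hx : 0 < x) :
    lam (x, -2) = 0 := by
  have hflip := h2 x (-2) (-2) x hx (by norm_num) ⟨-1, by norm_num⟩ (by ring)
  have hx2 : lam (x, -(-2)) = 0 := h3.eq_zero_of_ne_zero_of_ne_neg_two hx (by norm_num) (by norm_num)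
  rw [hx2, mul_zero] at hflip
  exact mul_self_eq_zero.mp hflip

theorem ScaleRel.eq_zero_of_ne (h1 : ScaleRel k lam) (h3 : VanishRel lam) (hk : 0 < k)
    (hx : 0 < x) (hxk : x ≠ k) : lam (x, 0) = 0 := by
  have hsq : lam (x, 0) * lam (x, 0) = lam (k, 0) * lam (x, 0) := by
    simpa [Int.mul_ediv_cancel k hx.ne'] using h1 x 0 0 x hx (zero_mul x) dvd_rfl
  have hcross : lam (k, 0) * lam (x, 0) = 0 := by
    by_cases hkx : k ∣ x
    · exact h3.mul_eq_zero_of_not_dvd hx fun hxk' => hxk (Int.dvd_antisymm hx.le hk.le hxk' hkx)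
    · rw [mul_comm]
      exact h3.mul_eq_zero_of_not_dvd hk hkx
  exact mul_self_eq_zero.mp (hsq.trans hcross)

theorem eq_zero_of_pos_of_ne (h1 : ScaleRel k lam) (h2 : FlipRel k lam) (h3 : VanishRel lam)
    (hk : 0 < k) (hx : 0 < x) (hne : (x, y) ≠ (k, 0)) : lam (x, y) = 0 := by
  by_cases hy : y = 0
  · subst hy
    exact h1.eq_zero_of_ne h3 hk hx fun hxk => hne (by rw [hxk])
  by_cases hy2 : y = -2
  · subst hy2
    exact h2.eq_zero_of_neg_two h3 hx
  exact h3.eq_zero_of_ne_zero_of_ne_neg_two hx hy hy2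

end

/-- Solution of the coefficient system for `E(u_{ke₁} + u_{-ke₁})` in the
`PSL₂(ℤ)` case: the only possibly nonzero coefficients are at `(k,0)` and `(-k,0)`. -/
theorem stmt_2 (k : ℤ) (hk : 1 ≤ k) (lam : ℤ × ℤ → ℂ)
    (hsym : ∀ x y : ℤ, lam (x, y) = lam (-x, y))
    (hzero : ∀ b : ℤ, lam (0, b) = 0)
    (heq1 : ∀ x y b a : ℤ, 0 < a → b * x = 0 → a ∣ x →
      lam (x, y) * lam (a, b) = lam (k * x / a, y) * lam (a, b))
    (heq2 : ∀ x y b a : ℤ, 0 < a → b ≠ 0 → b ∣ 2 → 2 * a + b * x = 0 →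
      lam (x, y) * lam (a, b) = lam (2 * k / b, y - 4 / b) * lam (a, -b))
    (heq3 : ∀ x y b a : ℤ, 0 < a → ¬(b * x = 0 ∧ a ∣ x) →
      ¬(b ≠ 0 ∧ b ∣ 2 ∧ 2 * a + b * x = 0) →
      lam (x, y) * lam (a, b) = 0) :
    ∀ x y : ℤ, (x, y) ≠ (k, (0 : ℤ)) → (x, y) ≠ (-k, (0 : ℤ)) →
      lam (x, y) = 0 := by
  have hpos : ∀ x y : ℤ, 0 < x → (x, y) ≠ (k, 0) → lam (x, y) = 0 := fun _ _ hx hne =>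
    eq_zero_of_pos_of_ne heq1 heq2 heq3 (by omega) hx hne
  intro x y hne hne'
  rcases lt_trichotomy x 0 with hx | rfl | hx
  · rw [hsym]
    refine hpos (-x) y (by omega) fun h => hne' ?_
    simp only [Prod.mk.injEq, neg_eq_iff_eq_neg] at h ⊢
    exact h
  · exact hzero y
  · exact hpos x y hx hne
end

section
/- Let ℓ ≥ 1 be an integer and let λ, μ : ℤ × ℤ → ℂ be square-summable functions satisfying: (i) λ(-ℓ, b) = 0 and μ(-ℓ, b) = 0 for all b ∈ ℤ; (ii) λ(x,y) = λ(-2ℓ-x, y) and μ(x,y) = μ(-2ℓ-x, y) for all x, y ∈ ℤ; (iii) λ(x,y) + μ(x,-y) = 0 for all x ∈ ℤ and all y ≠ 0, and λ(x,0) + μ(x,0) = 0 for all x ∉ {0, -2ℓ}; (iv) for all s, a, b, y ∈ ℤ with s ≠ 0, b ≠ 0, a ≠ -ℓ, y ≠ 0 and (a+ℓ)·y ≠ s: if b·((a+ℓ)y - s) ≠ 2(a+ℓ), then λ(s - ℓ - (a+ℓ)y, y)·λ(a,b) = 0, and if b·((a+ℓ)y - s) ≠ -2(a+ℓ), then λ(s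 - ℓ - (a+ℓ)y, -y)·λ(a,b) = 0; (v) for all a ∈ ℤ with a ∉ {0, -ℓ, -2ℓ}: for every integer t ≠ 0, (λ(t(a+ℓ) - ℓ, 0) - μ(t(a+ℓ) - ℓ, 0))·λ(a,0) = (λ(ℓ(t-1), 0) - μ(ℓ(t-1), 0))·λ(a,0), and for every integer s ≠ 0 not divisible by a+ℓ, (λ(s-ℓ, 0) - μ(s-ℓ, 0))·λ(a,0) = 0. Then λ(x,y) = 0 and μ(x,y) = 0 for every pair (x,y) ∈ ℤ × ℤ other than (0,0) and (-2ℓ, 0). -/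
/-! Off the axis, choosing `s` in (iv) so that `s - ℓ - (a + ℓ) y = a` turns (iv) into
`λ(a, b)² = 0`. On the axis put `g x = λ(x, 0) - μ(x, 0)`, which by (iii) is `2 λ(x, 0)` away
from `0` and `-2ℓ`. If `λ(a, 0) ≠ 0`, then (v) with `t = 1` gives `g 0 = g a ≠ 0`, so by the
second half of (v) `a + ℓ` divides `ℓ`, say `ℓ = (a + ℓ) k` with `|k| ≥ 2`. Now (v) at `k t`
shows that `g` is constant along `ℓ (kⁿ - 1)`, so `λ` takes the nonzero value `g 0 / 2` at
infinitely many points, which square-summability forbids. -/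

open Filter Topology

theorem eq_zero_of_summable_sq_of_injective {α E : Type*} [NormedAddCommGroup E] {f : α → E}
    (hf : Summable fun p => ‖f p‖ ^ 2) {φ : ℕ → α} (hφ : Function.Injective φ) {c : E}
    (hc : ∀ n, f (φ n) = c) : c = 0 := by
  have h : Tendsto (fun n => ‖f (φ n)‖ ^ 2) atTop (𝓝 0) := by
    rw [← Nat.cofinite_eq_atTop]
    exact hf.tendsto_cofinite_zero.comp hφ.tendsto_cofinite
  simp only [hc] at h
  simpa using tendsto_nhds_unique tendsto_const_nhds h

theorem apply_mul_pow_sub_one_eq_apply_zero {β : Type*} (g : ℤ → β) {l k : ℤ} (hk : k ≠ 0)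
    (hstep : ∀ t, t ≠ 0 → g (l * (k * t - 1)) = g (l * (t - 1))) (n : ℕ) :
    g (l * (k ^ n - 1)) = g 0 := by
  induction n with
  | zero => simp
  | succ n ih => rw [pow_succ', hstep _ (pow_ne_zero n hk), ih]

theorem lam_eq_zero_of_snd_ne_zero_s3 (l : ℤ) (lam : ℤ × ℤ → ℂ)
    (h1l : ∀ b : ℤ, lam (-l, b) = 0)
    (h4 : ∀ s a b y : ℤ, s ≠ 0 → b ≠ 0 → a ≠ -l → y ≠ 0 → (a + l) * y ≠ s →
      b * ((a + l) * y - s) ≠ 2 * (a + l) →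
      lam (s - l - (a + l) * y, y) * lam (a, b) = 0)
    (h4' : ∀ s a b y : ℤ, s ≠ 0 → b ≠ 0 → a ≠ -l → y ≠ 0 → (a + l) * y ≠ s →
      b * ((a + l) * y - s) ≠ -2 * (a + l) →
      lam (s - l - (a + l) * y, -y) * lam (a, b) = 0)
    (a b : ℤ) (hb : b ≠ 0) : lam (a, b) = 0 := by
  by_cases hal : a = -l
  · exact hal ▸ h1l b
  have hd : a + l ≠ 0 := fun h => hal (by omega)
  rcases hb.lt_or_gt with hneg | hpos
  · have key := h4' ((a + l) * (1 - b)) a b (-b) (mul_ne_zero hd (by omega)) hb hal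
      (neg_ne_zero.mpr hb) (fun h => hd (by linear_combination -h))
      (fun h => hd ((mul_eq_zero.mp (by linear_combination h : (2 - b) * (a + l) = 0)).resolve_left
        (by omega)))
    rw [show (a + l) * (1 - b) - l - (a + l) * -b = a by ring, neg_neg] at key
    exact mul_self_eq_zero.mp key
  · have key := h4 ((a + l) * (b + 1)) a b b (mul_ne_zero hd (by omega)) hb hal hb
      (fun h => hd (by linear_combination -h))
      (fun h => hd ((mul_eq_zero.mp (by linear_combination -h : (b + 2) * (a + l) = 0)).resolve_left
        (by omega)))
    rw [show (a + l) * (b + 1) - l - (a + l) * b = a by ring] at key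
    exact mul_self_eq_zero.mp key

theorem lam_axis_eq_zero {l : ℤ} (hl : l ≠ 0) (lam mu : ℤ × ℤ → ℂ)
    (hsuml : Summable fun p : ℤ × ℤ => ‖lam p‖ ^ 2)
    (h1l : lam (-l, 0) = 0)
    (h3' : ∀ x : ℤ, x ≠ 0 → x ≠ -2 * l → lam (x, 0) + mu (x, 0) = 0)
    (h5 : ∀ a : ℤ, a ≠ 0 → a ≠ -l → a ≠ -2 * l → ∀ t : ℤ, t ≠ 0 →
      (lam (t * (a + l) - l, 0) - mu (t * (a + l) - l, 0)) * lam (a, 0)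
        = (lam (l * (t - 1), 0) - mu (l * (t - 1), 0)) * lam (a, 0))
    (h5' : ∀ a : ℤ, a ≠ 0 → a ≠ -l → a ≠ -2 * l → ∀ s : ℤ, s ≠ 0 →
      ¬(a + l) ∣ s →
      (lam (s - l, 0) - mu (s - l, 0)) * lam (a, 0) = 0)
    (a : ℤ) (ha0 : a ≠ 0) (ha2 : a ≠ -2 * l) : lam (a, 0) = 0 := by
  by_cases hal : a = -l
  · exact hal ▸ h1l
  by_contra hla
  set g : ℤ → ℂ := fun x => lam (x, 0) - mu (x, 0)
  have hg_two_mul : ∀ x, x ≠ 0 → x ≠ -2 * l → g x = 2 * lam (x, 0) := fun x hx0 hx2 => by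
    linear_combination -h3' x hx0 hx2
  have hg_step : ∀ t, t ≠ 0 → g (t * (a + l) - l) = g (l * (t - 1)) :=
    fun t ht => mul_right_cancel₀ hla (h5 a ha0 hal ha2 t ht)
  have hg0 : g 0 ≠ 0 := by
    have h := hg_step 1 one_ne_zero
    rw [show (1 : ℤ) * (a + l) - l = a by ring, show l * ((1 : ℤ) - 1) = 0 by ring,
      hg_two_mul a ha0 ha2] at h
    exact h ▸ mul_ne_zero two_ne_zero hla
  obtain ⟨k, hk⟩ : (a + l) ∣ l := by
    by_contra hdl
    have h := h5' a ha0 hal ha2 l hl hdl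
    rw [sub_self, ← zero_mul (lam (a, 0))] at h
    exact hg0 (mul_right_cancel₀ hla h)
  have hk_natAbs : 1 < k.natAbs := by
    by_contra hk1
    obtain rfl | rfl | rfl : k = 0 ∨ k = 1 ∨ k = -1 := by omega
    all_goals simp only [mul_zero, mul_one, mul_neg] at hk; omega
  have horbit := apply_mul_pow_sub_one_eq_apply_zero g (l := l) (k := k) (by omega) fun t ht => by
    rw [← hg_step (k * t) (mul_ne_zero (by omega) ht)]
    congr 1; linear_combination (-t) * hk
  have hpt : ∀ n : ℕ, lam (l * (k ^ (n + 1) - 1), 0) = g 0 / 2 := by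
    intro n
    have hK : 1 < (k ^ (n + 1)).natAbs := by
      rw [Int.natAbs_pow]; exact Nat.one_lt_pow n.succ_ne_zero hk_natAbs
    have hx0 : l * (k ^ (n + 1) - 1) ≠ 0 := mul_ne_zero hl (by omega)
    have hx2 : l * (k ^ (n + 1) - 1) ≠ -2 * l := fun h =>
      (mul_ne_zero hl (by omega : k ^ (n + 1) + 1 ≠ 0)) (by linear_combination h)
    have h := horbit (n + 1)
    rw [hg_two_mul _ hx0 hx2] at h
    linear_combination h / 2
  refine hg0 ((div_eq_zero_iff.mp (eq_zero_of_summable_sq_of_injective hsuml ?_ hpt)).resolve_right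
    two_ne_zero)
  intro m n h
  have h' := sub_left_injective (mul_left_cancel₀ hl (Prod.mk.inj h).1)
  simpa using Int.pow_right_injective hk_natAbs h'

theorem stmt_3_general (l : ℤ) (hl : 1 ≤ l) (lam mu : ℤ × ℤ → ℂ)
    (hsuml : Summable fun p : ℤ × ℤ => ‖lam p‖ ^ 2)
    (h1l : ∀ b : ℤ, lam (-l, b) = 0)
    (h3 : ∀ x y : ℤ, y ≠ 0 → lam (x, y) + mu (x, -y) = 0)
    (h3' : ∀ x : ℤ, x ≠ 0 → x ≠ -2 * l → lam (x, 0) + mu (x, 0) = 0)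
    (h4 : ∀ s a b y : ℤ, s ≠ 0 → b ≠ 0 → a ≠ -l → y ≠ 0 → (a + l) * y ≠ s →
      b * ((a + l) * y - s) ≠ 2 * (a + l) →
      lam (s - l - (a + l) * y, y) * lam (a, b) = 0)
    (h4' : ∀ s a b y : ℤ, s ≠ 0 → b ≠ 0 → a ≠ -l → y ≠ 0 → (a + l) * y ≠ s →
      b * ((a + l) * y - s) ≠ -2 * (a + l) →
      lam (s - l - (a + l) * y, -y) * lam (a, b) = 0)
    (h5 : ∀ a : ℤ, a ≠ 0 → a ≠ -l → a ≠ -2 * l → ∀ t : ℤ, t ≠ 0 →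
      (lam (t * (a + l) - l, 0) - mu (t * (a + l) - l, 0)) * lam (a, 0)
        = (lam (l * (t - 1), 0) - mu (l * (t - 1), 0)) * lam (a, 0))
    (h5' : ∀ a : ℤ, a ≠ 0 → a ≠ -l → a ≠ -2 * l → ∀ s : ℤ, s ≠ 0 →
      ¬(a + l) ∣ s →
      (lam (s - l, 0) - mu (s - l, 0)) * lam (a, 0) = 0) :
    ∀ x y : ℤ, (x, y) ≠ ((0 : ℤ), (0 : ℤ)) → (x, y) ≠ (-2 * l, (0 : ℤ)) →
      lam (x, y) = 0 ∧ mu (x, y) = 0 := by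
  have hoff := lam_eq_zero_of_snd_ne_zero_s3 l lam h1l h4 h4'
  have haxis := lam_axis_eq_zero (by omega : l ≠ 0) lam mu hsuml (h1l 0) h3' h5 h5'
  intro x y hne0 hne2
  by_cases hy : y = 0
  · subst hy
    have hx0 : x ≠ 0 := by rintro rfl; exact hne0 rfl
    have hx2 : x ≠ -2 * l := by rintro rfl; exact hne2 rfl
    have h := h3' x hx0 hx2
    rw [haxis x hx0 hx2, zero_add] at h
    exact ⟨haxis x hx0 hx2, h⟩
  · have h := h3 x (-y) (neg_ne_zero.mpr hy)
    rw [hoff x (-y) (neg_ne_zero.mpr hy), neg_neg, zero_add] at h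
    exact ⟨hoff x y hy, h⟩

/-- Solution of the coefficient system for `c_{ℓe₁}` in the induction step of
the `SL₂(ℤ)` case: the only possibly nonzero coefficients are at `(0,0)` and
`(-2ℓ,0)`. -/
theorem stmt_3 (l : ℤ) (hl : 1 ≤ l) (lam mu : ℤ × ℤ → ℂ)
    (hsuml : Summable fun p : ℤ × ℤ => ‖lam p‖ ^ 2)
    (hsumm : Summable fun p : ℤ × ℤ => ‖mu p‖ ^ 2)
    (h1l : ∀ b : ℤ, lam (-l, b) = 0)
    (h1m : ∀ b : ℤ, mu (-l, b) = 0)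
    (h2l : ∀ x y : ℤ, lam (x, y) = lam (-2 * l - x, y))
    (h2m : ∀ x y : ℤ, mu (x, y) = mu (-2 * l - x, y))
    (h3 : ∀ x y : ℤ, y ≠ 0 → lam (x, y) + mu (x, -y) = 0)
    (h3' : ∀ x : ℤ, x ≠ 0 → x ≠ -2 * l → lam (x, 0) + mu (x, 0) = 0)
    (h4 : ∀ s a b y : ℤ, s ≠ 0 → b ≠ 0 → a ≠ -l → y ≠ 0 → (a + l) * y ≠ s →
      b * ((a + l) * y - s) ≠ 2 * (a + l) →
      lam (s - l - (a + l) * y, y) * lam (a, b) = 0)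
    (h4' : ∀ s a b y : ℤ, s ≠ 0 → b ≠ 0 → a ≠ -l → y ≠ 0 → (a + l) * y ≠ s →
      b * ((a + l) * y - s) ≠ -2 * (a + l) →
      lam (s - l - (a + l) * y, -y) * lam (a, b) = 0)
    (h5 : ∀ a : ℤ, a ≠ 0 → a ≠ -l → a ≠ -2 * l → ∀ t : ℤ, t ≠ 0 →
      (lam (t * (a + l) - l, 0) - mu (t * (a + l) - l, 0)) * lam (a, 0)
        = (lam (l * (t - 1), 0) - mu (l * (t - 1), 0)) * lam (a, 0))
    (h5' : ∀ a : ℤ, a ≠ 0 → a ≠ -l → a ≠ -2 * l → ∀ s : ℤ, s ≠ 0 →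
      ¬(a + l) ∣ s →
      (lam (s - l, 0) - mu (s - l, 0)) * lam (a, 0) = 0) :
    ∀ x y : ℤ, (x, y) ≠ ((0 : ℤ), (0 : ℤ)) → (x, y) ≠ (-2 * l, (0 : ℤ)) →
      lam (x, y) = 0 ∧ mu (x, y) = 0 :=
  stmt_3_general l hl lam mu hsuml h1l h3 h3' h4 h4' h5 h5'
end

section
/- Let λ : ℚ × ℚ → ℂ be a function such that for all s, a, b, y ∈ ℚ with s ≠ 0, b ≠ 0 and a ≠ -1: if y ∉ {0, s/(a+1), s/(a+1) + 2/b}, then λ(s - 1 - (a+1)y, y)·λ(a,b) = 0; and if y ∉ {0, s/(a+1), s/(a+1) - 2/b}, then λ(s - 1 - (a+1)y, -y)·λ(a,b) = 0. Then λ(a,b) = 0 for all a, b ∈ ℚ with a ≠ -1 and b ≠ 0. -/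
/-!
Take `y = b` and `s = (a + 1)(1 + b)` in the first relation: then `s - 1 - (a + 1) y = a`, so it
reads `λ(a, b)² = 0`, and the side conditions only exclude `b = -1` (for `s ≠ 0`) and `b = -2`
(for `y ≠ s/(a+1) + 2/b`). Symmetrically `y = -b`, `s = (a + 1)(1 - b)` in the second relation
gives `λ(a, b)² = 0` unless `b ∈ {1, 2}`, and no `b` lies in both exceptional sets.
-/

section

variable {K M₀ : Type*} [Field K] [MulZeroClass M₀] [NoZeroDivisors M₀]

theorem eq_zero_of_coeff_relation_pos (lam : K × K → M₀)
    (h1 : ∀ s a b y : K, s ≠ 0 → b ≠ 0 → a ≠ -1 →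
      y ≠ 0 → y ≠ s / (a + 1) → y ≠ s / (a + 1) + 2 / b →
      lam (s - 1 - (a + 1) * y, y) * lam (a, b) = 0)
    {a b : K} (ha : a ≠ -1) (hb : b ≠ 0) (hb1 : b ≠ -1) (hb2 : b ≠ -2) :
    lam (a, b) = 0 := by
  have ha1 : a + 1 ≠ 0 := by rwa [Ne, add_eq_zero_iff_eq_neg]
  have hs : (a + 1) * (1 + b) ≠ 0 :=
    mul_ne_zero ha1 fun h => hb1 (by linear_combination h)
  have hquot : (a + 1) * (1 + b) / (a + 1) = 1 + b := mul_div_cancel_left₀ _ ha1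
  have hy1 : b ≠ (a + 1) * (1 + b) / (a + 1) := by
    rw [hquot]; intro h; simpa using congrArg (· - b) h
  have hy2 : b ≠ (a + 1) * (1 + b) / (a + 1) + 2 / b := by
    rw [hquot]; intro h; field_simp at h; exact hb2 (by linear_combination -h)
  have key := h1 _ a b b hs hb ha hb hy1 hy2
  rwa [show (a + 1) * (1 + b) - 1 - (a + 1) * b = a by ring, mul_self_eq_zero] at key

theorem eq_zero_of_coeff_relation_neg (lam : K × K → M₀)
    (h2 : ∀ s a b y : K, s ≠ 0 → b ≠ 0 → a ≠ -1 →
      y ≠ 0 → y ≠ s / (a + 1) → y ≠ s / (a + 1) - 2 / b →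
      lam (s - 1 - (a + 1) * y, -y) * lam (a, b) = 0)
    {a b : K} (ha : a ≠ -1) (hb : b ≠ 0) (hb1 : b ≠ 1) (hb2 : b ≠ 2) :
    lam (a, b) = 0 := by
  have ha1 : a + 1 ≠ 0 := by rwa [Ne, add_eq_zero_iff_eq_neg]
  have hs : (a + 1) * (1 - b) ≠ 0 :=
    mul_ne_zero ha1 fun h => hb1 (by linear_combination -h)
  have hquot : (a + 1) * (1 - b) / (a + 1) = 1 - b := mul_div_cancel_left₀ _ ha1
  have hy1 : -b ≠ (a + 1) * (1 - b) / (a + 1) := by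
    rw [hquot]; intro h; simpa using congrArg (· + b) h
  have hy2 : -b ≠ (a + 1) * (1 - b) / (a + 1) - 2 / b := by
    rw [hquot]; intro h; field_simp at h; exact hb2 (by linear_combination -h)
  have key := h2 _ a b (-b) hs hb ha (neg_ne_zero.mpr hb) hy1 hy2
  rwa [show (a + 1) * (1 - b) - 1 - (a + 1) * -b = a by ring, neg_neg, mul_self_eq_zero] at key

end

/-- Vanishing lemma (Step 4 over ℚ): the coefficient system forces
`λ(a,b) = 0` for all `a ≠ -1` and `b ≠ 0`. -/
theorem stmt_4 (lam : ℚ × ℚ → ℂ)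
    (h1 : ∀ s a b y : ℚ, s ≠ 0 → b ≠ 0 → a ≠ -1 →
      y ≠ 0 → y ≠ s / (a + 1) → y ≠ s / (a + 1) + 2 / b →
      lam (s - 1 - (a + 1) * y, y) * lam (a, b) = 0)
    (h2 : ∀ s a b y : ℚ, s ≠ 0 → b ≠ 0 → a ≠ -1 →
      y ≠ 0 → y ≠ s / (a + 1) → y ≠ s / (a + 1) - 2 / b →
      lam (s - 1 - (a + 1) * y, -y) * lam (a, b) = 0) :
    ∀ a b : ℚ, a ≠ -1 → b ≠ 0 → lam (a, b) = 0 := by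
  intro a b ha hb
  rcases hb.lt_or_gt with hneg | hpos
  · exact eq_zero_of_coeff_relation_neg lam h2 ha hb (by linarith) (by linarith)
  · exact eq_zero_of_coeff_relation_pos lam h1 ha hb (by linarith) (by linarith)
end

section
/- Let ℓ ≥ 1 be an integer and let λ : ℤ × ℤ → ℂ be a function such that for all s, a, b, y ∈ ℤ with s ≠ 0, b ≠ 0, a ≠ -ℓ, y ≠ 0 and (a+ℓ)·y ≠ s: if b·((a+ℓ)y - s) ≠ 2(a+ℓ), then λ(s - ℓ - (a+ℓ)y, y)·λ(a,b) = 0; and if b·((a+ℓ)y - s) ≠ -2(a+ℓ), then λ(s - ℓ - (a+ℓ)y, -y)·λ(a,b) = 0. Then λ(a,b) = 0 for all a, b ∈ ℤ with a ≠ -ℓ and b ≠ 0. -/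
/-!
Given `(a, b)` with `a + ℓ ≠ 0`, choose `s` and `y` so that the first factor is again `λ(a, b)`:
`y = b, s = (a + ℓ)(b + 1)` in the first family, `y = -b, s = (a + ℓ)(1 - b)` in the second.
Then `λ(a, b)² = 0`. The side conditions exclude only `b ∈ {-1, -2}` resp. `b ∈ {1, 2}`, so one of
the two families always applies.
-/

section

variable {M : Type*} [MulZeroClass M] [NoZeroDivisors M] {l : ℤ} {lam : ℤ × ℤ → M}

theorem eq_zero_of_forward_relations
    (h1 : ∀ s a b y : ℤ, s ≠ 0 → b ≠ 0 → a ≠ -l → y ≠ 0 → (a + l) * y ≠ s →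
      b * ((a + l) * y - s) ≠ 2 * (a + l) →
      lam (s - l - (a + l) * y, y) * lam (a, b) = 0)
    {a b : ℤ} (ha : a ≠ -l) (hb : b ≠ 0) (hb₁ : b ≠ -1) (hb₂ : b ≠ -2) :
    lam (a, b) = 0 := by
  have hal : a + l ≠ 0 := by omega
  have key := h1 ((a + l) * (b + 1)) a b b (mul_ne_zero hal (by omega)) hb ha hb
    ((mul_right_injective₀ hal).ne (by omega))
    (by rw [show b * ((a + l) * b - (a + l) * (b + 1)) = -b * (a + l) by ring]
        exact (mul_left_injective₀ hal).ne (by omega))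
  rwa [show (a + l) * (b + 1) - l - (a + l) * b = a by ring, mul_self_eq_zero] at key

theorem eq_zero_of_backward_relations
    (h2 : ∀ s a b y : ℤ, s ≠ 0 → b ≠ 0 → a ≠ -l → y ≠ 0 → (a + l) * y ≠ s →
      b * ((a + l) * y - s) ≠ -2 * (a + l) →
      lam (s - l - (a + l) * y, -y) * lam (a, b) = 0)
    {a b : ℤ} (ha : a ≠ -l) (hb : b ≠ 0) (hb₁ : b ≠ 1) (hb₂ : b ≠ 2) :
    lam (a, b) = 0 := by
  have hal : a + l ≠ 0 := by omega
  have key := h2 ((a + l) * (1 - b)) a b (-b) (mul_ne_zero hal (by omega)) hb ha (by omega)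
    ((mul_right_injective₀ hal).ne (by omega))
    (by rw [show b * ((a + l) * -b - (a + l) * (1 - b)) = -b * (a + l) by ring]
        exact (mul_left_injective₀ hal).ne (by omega))
  rwa [show (a + l) * (1 - b) - l - (a + l) * -b = a by ring, neg_neg, mul_self_eq_zero] at key

end

theorem stmt_5_general (l : ℤ) (lam : ℤ × ℤ → ℂ)
    (h1 : ∀ s a b y : ℤ, s ≠ 0 → b ≠ 0 → a ≠ -l → y ≠ 0 → (a + l) * y ≠ s →
      b * ((a + l) * y - s) ≠ 2 * (a + l) →
      lam (s - l - (a + l) * y, y) * lam (a, b) = 0)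
    (h2 : ∀ s a b y : ℤ, s ≠ 0 → b ≠ 0 → a ≠ -l → y ≠ 0 → (a + l) * y ≠ s →
      b * ((a + l) * y - s) ≠ -2 * (a + l) →
      lam (s - l - (a + l) * y, -y) * lam (a, b) = 0) :
    ∀ a b : ℤ, a ≠ -l → b ≠ 0 → lam (a, b) = 0 := by
  intro a b ha hb
  by_cases hneg : b = -1 ∨ b = -2
  · exact eq_zero_of_backward_relations h2 ha hb (by omega) (by omega)
  · exact eq_zero_of_forward_relations h1 ha hb (by omega) (by omega)

/-- Vanishing lemma (integer analogue with parameter ℓ): the coefficient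
system forces `λ(a,b) = 0` for all `a ≠ -ℓ` and `b ≠ 0`. -/
theorem stmt_5 (l : ℤ) (hl : 1 ≤ l) (lam : ℤ × ℤ → ℂ)
    (h1 : ∀ s a b y : ℤ, s ≠ 0 → b ≠ 0 → a ≠ -l → y ≠ 0 → (a + l) * y ≠ s →
      b * ((a + l) * y - s) ≠ 2 * (a + l) →
      lam (s - l - (a + l) * y, y) * lam (a, b) = 0)
    (h2 : ∀ s a b y : ℤ, s ≠ 0 → b ≠ 0 → a ≠ -l → y ≠ 0 → (a + l) * y ≠ s →
      b * ((a + l) * y - s) ≠ -2 * (a + l) →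
      lam (s - l - (a + l) * y, -y) * lam (a, b) = 0) :
    ∀ a b : ℤ, a ≠ -l → b ≠ 0 → lam (a, b) = 0 :=
  stmt_5_general l lam h1 h2
end

section
/- Let λ, μ : ℚ → ℂ be square-summable functions with λ(x) + μ(x) = 0 for all x ∈ ℚ with x ∉ {0, -2}. Suppose that for every s ∈ ℚ with s ≠ 0 and every a ∈ ℚ with a ∉ {-2, -1, 0} one has (λ(s-1) - μ(s-1))·λ(a) = (λ(s(a+1)-1) - μ(s(a+1)-1))·λ(a). Then λ(a) = 0 for every a ∈ ℚ with a ∉ {-2, -1, 0}. -/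
/-!
Cancelling `λ(a) ≠ 0` turns the hypothesis into the invariance of `g(s) = λ(s - 1) - μ(s - 1)`
under `s ↦ s (a + 1)`, so `g` is constant on the orbit `(a + 1)ⁿ`, which is infinite because
`a + 1 ≠ 0` and `|a + 1| ≠ 1`. Square-summable functions tend to `0` along the cofinite filter, so this constant
is `0`; hence `λ(a) = μ(a)`, and with `λ(a) + μ(a) = 0` we get `λ(a) = 0`.
-/

open Filter Topology Function

lemma tendsto_cofinite_zero_of_summable_norm_sq {α E : Type*} [SeminormedAddCommGroup E]
    {f : α → E} (hf : Summable fun x => ‖f x‖ ^ 2) : Tendsto f cofinite (𝓝 0) := by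
  rw [tendsto_zero_iff_norm_tendsto_zero]
  simpa [Real.sqrt_sq (norm_nonneg _)] using hf.tendsto_cofinite_zero.sqrt

lemma eq_of_tendsto_cofinite_of_injective {α β : Type*} [TopologicalSpace β] [T2Space β]
    {f : α → β} {b c : β} (hf : Tendsto f cofinite (𝓝 b)) {x : ℕ → α} (hx : Injective x)
    (h : ∀ n, f (x n) = c) : c = b := by
  have hfx : Tendsto (f ∘ x) atTop (𝓝 b) := Nat.cofinite_eq_atTop ▸ hf.comp hx.tendsto_cofinite
  rw [show f ∘ x = fun _ => c from funext h] at hfx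
  exact tendsto_nhds_unique tendsto_const_nhds hfx

lemma pow_injective_of_abs_ne_one {R : Type*} [Ring R] [LinearOrder R] [IsStrictOrderedRing R]
    {q : R} (h0 : q ≠ 0) (h1 : |q| ≠ 1) : Injective (q ^ · : ℕ → R) := fun m n hmn =>
  pow_right_injective₀ (abs_pos.2 h0) h1 (by simpa only [← abs_pow] using congrArg abs hmn)

lemma apply_pow_eq_apply_one {M β : Type*} [MonoidWithZero M] [NoZeroDivisors M] {f : M → β}
    {q : M} (hq : q ≠ 0) (h : ∀ s, s ≠ 0 → f (s * q) = f s) (n : ℕ) : f (q ^ n) = f 1 := by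
  induction n with
  | zero => rw [pow_zero]
  | succ n ih => rw [pow_succ, h _ (pow_ne_zero n hq), ih]

/-- The `b = 0` part of Step 4 over ℚ: `λ(a) = 0` for `a ∉ {-2, -1, 0}`. -/
theorem stmt_6 (lam mu : ℚ → ℂ)
    (hsuml : Summable fun x : ℚ => ‖lam x‖ ^ 2)
    (hsumm : Summable fun x : ℚ => ‖mu x‖ ^ 2)
    (hsum0 : ∀ x : ℚ, x ≠ 0 → x ≠ -2 → lam x + mu x = 0)
    (heq : ∀ s a : ℚ, s ≠ 0 → a ≠ -2 → a ≠ -1 → a ≠ 0 →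
      (lam (s - 1) - mu (s - 1)) * lam a
        = (lam (s * (a + 1) - 1) - mu (s * (a + 1) - 1)) * lam a) :
    ∀ a : ℚ, a ≠ -2 → a ≠ -1 → a ≠ 0 → lam a = 0 := by
  intro a ha2 ha1 ha0
  by_contra hla
  have hq0 : a + 1 ≠ 0 := fun h => ha1 (by linarith)
  have hq1 : |a + 1| ≠ 1 := fun h => by
    rcases abs_eq_abs.1 (h.trans abs_one.symm) with h | h
    exacts [ha0 (by linarith), ha2 (by linarith)]
  have hlim : Tendsto (fun x => lam x - mu x) cofinite (𝓝 0) := by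
    simpa using (tendsto_cofinite_zero_of_summable_norm_sq hsuml).sub
      (tendsto_cofinite_zero_of_summable_norm_sq hsumm)
  have horbit := apply_pow_eq_apply_one (f := fun s => lam (s - 1) - mu (s - 1)) hq0
    fun s hs => (mul_right_cancel₀ hla (heq s a hs ha2 ha1 ha0)).symm
  have hzero : lam (1 - 1) - mu (1 - 1) = 0 :=
    eq_of_tendsto_cofinite_of_injective hlim
      ((sub_left_injective (b := 1)).comp (pow_injective_of_abs_ne_one hq0 hq1)) horbit
  have hdiff : lam a - mu a = 0 := by simpa using (horbit 1).trans hzero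
  have hsum : lam a + mu a = 0 := hsum0 a ha0 ha2
  exact hla (by linear_combination (hdiff + hsum) / 2)
end

section
/- Let ℓ ≥ 1 be an integer and let λ, μ : ℤ → ℂ be square-summable functions with λ(x) + μ(x) = 0 for all x ∈ ℤ with x ∉ {0, -2ℓ}. Suppose that for every a ∈ ℤ with a ∉ {0, -ℓ, -2ℓ}: (a) for every integer t ≠ 0, (λ(t(a+ℓ) - ℓ) - μ(t(a+ℓ) - ℓ))·λ(a) = (λ(ℓ(t-1)) - μ(ℓ(t-1)))·λ(a); and (b) for every integer s ≠ 0 not divisible by a+ℓ, (λ(s-ℓ) - μ(s-ℓ))·λ(a) = 0. Then λ(a) = 0 for every a ∈ ℤ with a ∉ {0, -ℓ, -2ℓ}. -/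
/-!
Write `D = λ - μ`, so that `D x = 2 λ(x)` off `{0, -2ℓ}`, and suppose `λ(a) ≠ 0`; then `λ(a)` cancels
from (a) and (b). If `a + ℓ ∤ ℓ`, then (b) with `s = ℓ` gives `D(0) = 0`, while (a) with `t = 1` gives
`D(a) = D(0)`, so `2 λ(a) = 0`. If `ℓ = d (a + ℓ)`, then `|d| ≥ 2`, and (a) with `t = dᵏ` shows that `D`
takes the value `D(a)` at all the distinct points `(dᵏ - d)(a + ℓ)`; hence `λ` takes the nonzero value
`λ(a)` infinitely often, which square-summability forbids.
-/

open Set Filter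

lemma finite_setOf_eq_of_summable_norm_sq {α E : Type*} [NormedAddCommGroup E] {f : α → E}
    (hf : Summable fun x => ‖f x‖ ^ 2) {v : E} (hv : v ≠ 0) : {x | f x = v}.Finite := by
  have hv' : ‖v‖ ^ 2 ≠ 0 := by positivity
  have hne : ∀ᶠ x in cofinite, ‖f x‖ ^ 2 ≠ ‖v‖ ^ 2 :=
    hf.tendsto_cofinite_zero.eventually_ne hv'.symm
  rw [eventually_cofinite] at hne
  exact hne.subset fun x (hx : f x = v) => by simp [hx]

lemma injective_pow_sub_mul {c d : ℤ} (hc : c ≠ 0) (hd : 2 ≤ d.natAbs) :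
    Function.Injective fun k : ℕ => (d ^ k - d) * c := by
  intro j k h
  exact Int.pow_right_injective hd (by simpa using mul_right_cancel₀ hc h)

section Iteration

variable {β : Type*} {f : ℤ → β} {a l d : ℤ}

lemma apply_pow_sub_mul_eq (hl : l = (a + l) * d) (hd : d ≠ 0)
    (h : ∀ t : ℤ, t ≠ 0 → f (t * (a + l) - l) = f (l * (t - 1))) (k : ℕ) :
    f ((d ^ k - d) * (a + l)) = f a := by
  induction k with
  | zero => congr 1; linear_combination hl
  | succ k ih =>
    have hstep := h (d ^ k) (pow_ne_zero k hd)
    rw [show d ^ k * (a + l) - l = (d ^ k - d) * (a + l) by linear_combination -hl,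
      show l * (d ^ k - 1) = (d ^ (k + 1) - d) * (a + l) by linear_combination (d ^ k - 1) * hl]
      at hstep
    rw [← hstep, ih]

lemma two_le_natAbs_of_eq_mul (hl : l ≠ 0) (ha0 : a ≠ 0) (ha2l : a ≠ -2 * l)
    (hd : l = (a + l) * d) : 2 ≤ d.natAbs := by
  have : d ≠ 0 := by rintro rfl; exact hl (by simpa using hd)
  have : d ≠ 1 := by rintro rfl; exact ha0 (by linarith)
  have : d ≠ -1 := by rintro rfl; exact ha2l (by linarith)
  omega

lemma infinite_setOf_eq_apply_of_dvd (hl : l ≠ 0) (ha0 : a ≠ 0) (ha2l : a ≠ -2 * l)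
    (hdvd : (a + l) ∣ l) (h : ∀ t : ℤ, t ≠ 0 → f (t * (a + l) - l) = f (l * (t - 1))) :
    {x | f x = f a}.Infinite := by
  obtain ⟨d, hd⟩ := hdvd
  have hc : a + l ≠ 0 := by rintro hc; exact hl (by simpa [hc] using hd)
  have hd2 := two_le_natAbs_of_eq_mul hl ha0 ha2l hd
  refine (infinite_range_of_injective (injective_pow_sub_mul hc hd2)).mono ?_
  rintro _ ⟨k, rfl⟩
  exact apply_pow_sub_mul_eq hd (by omega) h k

end Iteration

theorem stmt_7_general (l : ℤ) (hl : 1 ≤ l) (lam mu : ℤ → ℂ)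
    (hsuml : Summable fun x : ℤ => ‖lam x‖ ^ 2)
    (hsum0 : ∀ x : ℤ, x ≠ 0 → x ≠ -2 * l → lam x + mu x = 0)
    (ha : ∀ a : ℤ, a ≠ 0 → a ≠ -l → a ≠ -2 * l → ∀ t : ℤ, t ≠ 0 →
      (lam (t * (a + l) - l) - mu (t * (a + l) - l)) * lam a
        = (lam (l * (t - 1)) - mu (l * (t - 1))) * lam a)
    (hb : ∀ a : ℤ, a ≠ 0 → a ≠ -l → a ≠ -2 * l → ∀ s : ℤ, s ≠ 0 →
      ¬(a + l) ∣ s → (lam (s - l) - mu (s - l)) * lam a = 0) :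
    ∀ a : ℤ, a ≠ 0 → a ≠ -l → a ≠ -2 * l → lam a = 0 := by
  intro a ha0 hal ha2l
  by_contra hlam
  set D : ℤ → ℂ := fun x => lam x - mu x
  have hD : ∀ x, x ≠ 0 → x ≠ -2 * l → D x = 2 * lam x := fun x hx0 hx2 => by
    linear_combination -hsum0 x hx0 hx2
  have hrel : ∀ t : ℤ, t ≠ 0 → D (t * (a + l) - l) = D (l * (t - 1)) := fun t ht =>
    mul_right_cancel₀ hlam (ha a ha0 hal ha2l t ht)
  have hvanish : ∀ s : ℤ, s ≠ 0 → ¬(a + l) ∣ s → D (s - l) = 0 := fun s hs hsd =>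
    (mul_eq_zero.mp (hb a ha0 hal ha2l s hs hsd)).resolve_right hlam
  clear_value D
  have hDa := hD a ha0 ha2l
  by_cases hdvd : (a + l) ∣ l
  · have hinf := infinite_setOf_eq_apply_of_dvd (by omega) ha0 ha2l hdvd hrel
    refine (hinf.sdiff (toFinite {0, -2 * l})).mono ?_
      (finite_setOf_eq_of_summable_norm_sq hsuml hlam)
    rintro x ⟨hx : D x = D a, hx02⟩
    simp only [mem_insert_iff, mem_singleton_iff, not_or] at hx02
    have hxlam := hD x hx02.1 hx02.2
    show lam x = lam a
    linear_combination (hx - hxlam + hDa) / 2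
  · have hD0 : D 0 = 0 := by
      simpa using hvanish l (by omega) hdvd
    have hDa0 : D a = D 0 := by simpa using hrel 1 one_ne_zero
    exact hlam (by linear_combination (hDa0 + hD0 - hDa) / 2)

/-- Step 4 of the appendix (the `b = 0` part of the induction step for
`SL₂(ℤ)`): `λ(a) = 0` for `a ∉ {0, -ℓ, -2ℓ}`. -/
theorem stmt_7 (l : ℤ) (hl : 1 ≤ l) (lam mu : ℤ → ℂ)
    (hsuml : Summable fun x : ℤ => ‖lam x‖ ^ 2)
    (hsumm : Summable fun x : ℤ => ‖mu x‖ ^ 2)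
    (hsum0 : ∀ x : ℤ, x ≠ 0 → x ≠ -2 * l → lam x + mu x = 0)
    (ha : ∀ a : ℤ, a ≠ 0 → a ≠ -l → a ≠ -2 * l → ∀ t : ℤ, t ≠ 0 →
      (lam (t * (a + l) - l) - mu (t * (a + l) - l)) * lam a
        = (lam (l * (t - 1)) - mu (l * (t - 1))) * lam a)
    (hb : ∀ a : ℤ, a ≠ 0 → a ≠ -l → a ≠ -2 * l → ∀ s : ℤ, s ≠ 0 →
      ¬(a + l) ∣ s → (lam (s - l) - mu (s - l)) * lam a = 0) :
    ∀ a : ℤ, a ≠ 0 → a ≠ -l → a ≠ -2 * l → lam a = 0 :=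
  stmt_7_general l hl lam mu hsuml hsum0 ha hb
end

section
/- For t ∈ ℚ let r_t denote the matrix with rows (1, t) and (0, 1) in SL₂(ℚ). Let g ∈ SL₂(ℚ) be such that g ≠ r_t and g ≠ -r_t for every t ∈ ℚ, and let x ∈ ℚ with x ≠ 0. Then for all integers n ≠ m one has r_{nx}·g·r_{nx}⁻¹ ≠ r_{mx}·g·r_{mx}⁻¹ and r_{nx}·g·r_{nx}⁻¹ ≠ -(r_{mx}·g·r_{mx}⁻¹). -/
/-!
Write g = !![a, b; c, d]. Two conjugates r_s g r_s⁻¹ and ±r_u g r_u⁻¹ coincide exactly when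
r_{s-u} g r_{s-u}⁻¹ = ±g. With `+`, the (0,0) and (0,1) entries of r_t g r_t⁻¹ - g, namely t c and
t (d - a) - t² c, force c = 0 and d = a for t ≠ 0, and then det g = a² = 1 makes g = ±r_b.
With `-`, the bottom row of r_t g r_t⁻¹ is (c, d - t c), which is -(c, d) only if c = d = 0,
contradicting det g = 1.
-/

open Matrix

/-- The upper unitriangular matrix `r t = !![1, t; 0, 1]` in `SL₂(ℚ)`. -/
def rMat (t : ℚ) : Matrix.SpecialLinearGroup (Fin 2) ℚ :=
  ⟨!![1, t; 0, 1], by simp [Matrix.det_fin_two_of]⟩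

open scoped MatrixGroups

lemma coe_rMat (t : ℚ) : (rMat t : Matrix (Fin 2) (Fin 2) ℚ) = !![1, t; 0, 1] := rfl

lemma rMat_add (s t : ℚ) : rMat (s + t) = rMat s * rMat t := by
  ext i j; fin_cases i <;> fin_cases j <;> simp [coe_rMat, mul_apply, add_comm]

lemma rMat_zero : rMat 0 = 1 := by
  ext i j; fin_cases i <;> fin_cases j <;> simp [coe_rMat]

lemma rMat_inv (t : ℚ) : (rMat t)⁻¹ = rMat (-t) :=
  inv_eq_of_mul_eq_one_right (by rw [← rMat_add, add_neg_cancel, rMat_zero])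

lemma rMat_sub_conj (s u : ℚ) (g : SL(2, ℚ)) :
    rMat (s - u) * g * (rMat (s - u))⁻¹ = (rMat u)⁻¹ * (rMat s * g * (rMat s)⁻¹) * rMat u := by
  rw [sub_eq_neg_add, rMat_add, ← rMat_inv]; group

lemma coe_rMat_conj (t : ℚ) (g : SL(2, ℚ)) :
    ((rMat t * g * (rMat t)⁻¹ : SL(2, ℚ)) : Matrix (Fin 2) (Fin 2) ℚ) =
      !![g 0 0 + t * g 1 0, g 0 1 + t * (g 1 1 - g 0 0) - t ^ 2 * g 1 0;
        g 1 0, g 1 1 - t * g 1 0] := by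
  simp only [rMat_inv, Matrix.SpecialLinearGroup.coe_mul, coe_rMat]
  rw [eta_fin_two (g : Matrix (Fin 2) (Fin 2) ℚ), mul_fin_two, mul_fin_two]
  ext i j; fin_cases i <;> fin_cases j <;> simp <;> ring

lemma SL2_det_fin_two (g : SL(2, ℚ)) : g 0 0 * g 1 1 - g 0 1 * g 1 0 = 1 := by
  rw [← det_fin_two]; exact g.det_coe

lemma exists_eq_rMat_or_eq_neg_rMat_of_rMat_conj_eq {t : ℚ} (ht : t ≠ 0) {g : SL(2, ℚ)}
    (h : rMat t * g * (rMat t)⁻¹ = g) : ∃ b, g = rMat b ∨ g = -rMat b := by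
  rw [Matrix.SpecialLinearGroup.ext_iff] at h
  simp only [coe_rMat_conj] at h
  have hc : g 1 0 = 0 := by simpa [ht] using h 0 0
  have hd : g 1 1 = g 0 0 := by simpa [ht, hc, sub_eq_zero] using h 0 1
  have ha : g 0 0 * g 0 0 = 1 := by simpa [hc, hd] using SL2_det_fin_two g
  rcases mul_self_eq_one_iff.mp ha with ha | ha
  · refine ⟨g 0 1, Or.inl ?_⟩
    ext i j; fin_cases i <;> fin_cases j <;> simp [coe_rMat, ha, hc, hd]
  · refine ⟨-g 0 1, Or.inr ?_⟩
    ext i j; fin_cases i <;> fin_cases j <;> simp [coe_rMat, ha, hc, hd]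

lemma rMat_conj_ne_neg (t : ℚ) (g : SL(2, ℚ)) : rMat t * g * (rMat t)⁻¹ ≠ -g := by
  rw [Ne, Matrix.SpecialLinearGroup.ext_iff]
  simp only [coe_rMat_conj, Matrix.SpecialLinearGroup.coe_neg]
  intro h
  have hc : g 1 0 = 0 := by simpa [self_eq_neg] using h 1 0
  have hd : g 1 1 = 0 := by simpa [hc, self_eq_neg] using h 1 1
  simpa [hc, hd] using SL2_det_fin_two g

/-- For `g ∈ SL₂(ℚ)` which is not `± r_t` for any `t`, and `x ≠ 0`, the
conjugates `r_{nx} g r_{nx}⁻¹` are pairwise distinct, even up to sign. -/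
theorem stmt_10 (g : Matrix.SpecialLinearGroup (Fin 2) ℚ)
    (hg : ∀ t : ℚ, g ≠ rMat t ∧ g ≠ -rMat t)
    (x : ℚ) (hx : x ≠ 0) (n m : ℤ) (hnm : n ≠ m) :
    rMat (n * x) * g * (rMat (n * x))⁻¹ ≠ rMat (m * x) * g * (rMat (m * x))⁻¹ ∧
    rMat (n * x) * g * (rMat (n * x))⁻¹ ≠ -(rMat (m * x) * g * (rMat (m * x))⁻¹) := by
  have ht : (n * x - m * x : ℚ) ≠ 0 := by
    rw [← sub_mul]; exact mul_ne_zero (sub_ne_zero.mpr (mod_cast hnm)) hx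
  refine ⟨fun h => ?_, fun h => ?_⟩
  · have hfix : rMat (n * x - m * x) * g * (rMat (n * x - m * x))⁻¹ = g := by
      rw [rMat_sub_conj, h]; group
    obtain ⟨b, hb⟩ := exists_eq_rMat_or_eq_neg_rMat_of_rMat_conj_eq ht hfix
    exact hb.elim (hg b).1 (hg b).2
  · apply rMat_conj_ne_neg (n * x - m * x) g
    rw [rMat_sub_conj, h, mul_neg, neg_mul, neg_inj]; group
end
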